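/- Under the MAR assumption, for mutually exclusive class indicators D₁, D₂ (D₁D₂ = 0 a.s.), the covariance between the mean-score single-observation terms M₁ = V·D₁ + (1 − V)·ρ₁ and M₂ = V·D₂ + (1 − V)·ρ₂ equals Cov(M₁, M₂) = E[ (1 − π) · ρ₁ρ₂ ] − θ₁θ₂, where θ_k = ℙ(D_k = 1). -/

import Mathlib

/-!
The mean-score term `M = V D + (1 - V) ρ` is `D` when the case is verified and its regression
`ρ = E[D | 𝒢]` otherwise. For `𝒢`-measurable `g`, pulling `g` out of `E[(1 - V) g | 𝒢]` gives
`E[(1 - V) g] = E[(1 - π) g]`, and conditional independence of `V` and `D` given `𝒢` gives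
`E[V D] = E[π ρ]`; together `E[M] = E[ρ] = E[D] = θ`. Since `V (1 - V) = 0` and `D₁ D₂ = 0`,
the product `M₁ M₂` collapses to `(1 - V) ρ₁ ρ₂`, whose mean is `E[(1 - π) ρ₁ ρ₂]` by the same
pull-out identity.
-/

open MeasureTheory ProbabilityTheory
open scoped ENNReal

section ZeroOne

variable {Ω : Type*} {m mΩ : MeasurableSpace Ω} {μ : Measure Ω} {X : Ω → ℝ}

lemma indicator_preimage_one_eq_self (hX : ∀ ω, X ω = 0 ∨ X ω = 1) :
    (X ⁻¹' {1}).indicator 1 = X := by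
  funext ω
  rcases hX ω with h | h <;> simp [h]

lemma memLp_top_of_zero_or_one (hXm : AEStronglyMeasurable X μ)
    (hX : ∀ ω, X ω = 0 ∨ X ω = 1) : MemLp X ∞ μ :=
  memLp_top_of_bound hXm 1 <| ae_of_all _ fun ω => by rcases hX ω with h | h <;> simp [h]

lemma integral_eq_measureReal_preimage_one (hXm : Measurable X)
    (hX : ∀ ω, X ω = 0 ∨ X ω = 1) : ∫ ω, X ω ∂μ = μ.real (X ⁻¹' {1}) := by
  conv_lhs => rw [← indicator_preimage_one_eq_self hX]
  exact integral_indicator_one (hXm (measurableSet_singleton 1))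

theorem ProbabilityTheory.CondIndepFun.condExp_mul_ae_eq_of_zero_or_one [StandardBorelSpace Ω]
    [IsFiniteMeasure μ] {hm : m ≤ mΩ} {Y : Ω → ℝ}
    (hXY : CondIndepFun m hm X Y μ) (hXm : Measurable X) (hYm : Measurable Y)
    (hX : ∀ ω, X ω = 0 ∨ X ω = 1) (hY : ∀ ω, Y ω = 0 ∨ Y ω = 1) :
    μ[X * Y | m] =ᵐ[μ] μ[X | m] * μ[Y | m] := by
  have h := (condIndepFun_iff_condExp_inter_preimage_eq_mul hXm hYm).1 hXY {1} {1}
    (measurableSet_singleton 1) (measurableSet_singleton 1)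
  rw [← indicator_preimage_one_eq_self hX, ← indicator_preimage_one_eq_self hY,
    ← Set.inter_indicator_one]
  exact h

end ZeroOne

lemma mul_add_one_sub_mul_mul_mul_add_one_sub_mul {v d₁ d₂ r₁ r₂ : ℝ} (hv : v = 0 ∨ v = 1)
    (hd : d₁ * d₂ = 0) :
    (v * d₁ + (1 - v) * r₁) * (v * d₂ + (1 - v) * r₂) = (1 - v) * (r₁ * r₂) := by
  rcases hv with rfl | rfl
  · ring
  · linear_combination hd

section PullOut

variable {Ω : Type*} {m mΩ : MeasurableSpace Ω} {μ : Measure Ω} [IsFiniteMeasure μ]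
  {V : Ω → ℝ}

theorem integral_one_sub_mul_eq_integral_one_sub_condExp_mul (hm : m ≤ mΩ) {g : Ω → ℝ}
    (hV : MemLp V ∞ μ) (hg : StronglyMeasurable[m] g) (hgi : Integrable g μ) :
    ∫ ω, (1 - V ω) * g ω ∂μ = ∫ ω, (1 - μ[V | m] ω) * g ω ∂μ := by
  have hpull : μ[V * g | m] =ᵐ[μ] μ[V | m] * g :=
    condExp_mul_of_stronglyMeasurable_right hg (hgi.mul_of_top_right hV) (hV.integrable le_top)
  calc ∫ ω, (1 - V ω) * g ω ∂μ = ∫ ω, g ω ∂μ - ∫ ω, (V * g) ω ∂μ := by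
        simp only [sub_mul, one_mul]
        exact integral_sub hgi (hgi.mul_of_top_right hV)
    _ = ∫ ω, g ω ∂μ - ∫ ω, (μ[V | m] * g) ω ∂μ := by
        rw [← integral_congr_ae hpull, integral_condExp hm]
    _ = ∫ ω, (1 - μ[V | m] ω) * g ω ∂μ := by
        simp only [sub_mul, one_mul]
        exact (integral_sub hgi (hgi.mul_of_top_right (hV.condExp le_top))).symm

theorem integral_mul_add_one_sub_mul_condExp (hm : m ≤ mΩ) {D : Ω → ℝ} (hV : MemLp V ∞ μ)
    (hD : Integrable D μ) (hVD : μ[V * D | m] =ᵐ[μ] μ[V | m] * μ[D | m]) :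
    ∫ ω, V ω * D ω + (1 - V ω) * μ[D | m] ω ∂μ = ∫ ω, D ω ∂μ := by
  have hπ : MemLp (μ[V | m]) ∞ μ := hV.condExp le_top
  calc ∫ ω, V ω * D ω + (1 - V ω) * μ[D | m] ω ∂μ
        = ∫ ω, (V * D) ω ∂μ + ∫ ω, (1 - V ω) * μ[D | m] ω ∂μ :=
        integral_add (hD.mul_of_top_right hV)
          (integrable_condExp.mul_of_top_right ((memLp_top_const 1).sub hV))
    _ = ∫ ω, (μ[V | m] * μ[D | m]) ω ∂μ + ∫ ω, (1 - μ[V | m] ω) * μ[D | m] ω ∂μ := by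
        rw [← integral_congr_ae hVD, integral_condExp hm,
          integral_one_sub_mul_eq_integral_one_sub_condExp_mul hm hV stronglyMeasurable_condExp
            integrable_condExp]
    _ = ∫ ω, μ[D | m] ω ∂μ := by
        have h : Integrable (fun ω => (1 - μ[V | m] ω) * μ[D | m] ω) μ :=
          integrable_condExp.mul_of_top_right ((memLp_top_const 1).sub hπ)
        rw [← integral_add (integrable_condExp.mul_of_top_right hπ) h]
        congr 1 with ω
        simp only [Pi.mul_apply]
        ring
    _ = ∫ ω, D ω ∂μ := integral_condExp hm

end PullOut

theorem mar_covariance_mean_score_terms_general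
    {Ω : Type*} [mΩ : MeasurableSpace Ω] [StandardBorelSpace Ω]
    (μ : Measure Ω) [IsProbabilityMeasure μ]
    (D₁ D₂ V : Ω → ℝ)
    (hD₁ : Measurable D₁) (hD₂ : Measurable D₂) (hV : Measurable V)
    (hD₁val : ∀ ω, D₁ ω = 0 ∨ D₁ ω = 1) (hD₂val : ∀ ω, D₂ ω = 0 ∨ D₂ ω = 1)
    (hVval : ∀ ω, V ω = 0 ∨ V ω = 1)
    (hexcl : ∀ᵐ ω ∂μ, D₁ ω * D₂ ω = 0)
    (𝒢 : MeasurableSpace Ω)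
    (h𝒢le : 𝒢 ≤ mΩ)
    (MAR : CondIndepFun (mΩ := mΩ) 𝒢 h𝒢le V (fun ω => (D₁ ω, D₂ ω)) μ) :
    (∫ ω, (V ω * D₁ ω + (1 - V ω) * (μ[D₁ | 𝒢]) ω)
          * (V ω * D₂ ω + (1 - V ω) * (μ[D₂ | 𝒢]) ω) ∂μ)
      - (∫ ω, V ω * D₁ ω + (1 - V ω) * (μ[D₁ | 𝒢]) ω ∂μ)
        * (∫ ω, V ω * D₂ ω + (1 - V ω) * (μ[D₂ | 𝒢]) ω ∂μ)
      = (∫ ω, (1 - (μ[V | 𝒢]) ω) * ((μ[D₁ | 𝒢]) ω * (μ[D₂ | 𝒢]) ω) ∂μ)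
        - (μ {ω | D₁ ω = 1}).toReal * (μ {ω | D₂ ω = 1}).toReal := by
  have hVb : MemLp V ∞ μ := memLp_top_of_zero_or_one hV.aestronglyMeasurable hVval
  have hρ₁ : MemLp (μ[D₁ | 𝒢]) ∞ μ :=
    (memLp_top_of_zero_or_one hD₁.aestronglyMeasurable hD₁val).condExp le_top
  have hmean : ∀ D : Ω → ℝ, Measurable[mΩ] D → (∀ ω, D ω = 0 ∨ D ω = 1) →
      CondIndepFun (mΩ := mΩ) 𝒢 h𝒢le V D μ →
      ∫ ω, V ω * D ω + (1 - V ω) * μ[D | 𝒢] ω ∂μ = (μ {ω | D ω = 1}).toReal :=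
    fun D hD hDval hVD =>
      (integral_mul_add_one_sub_mul_condExp h𝒢le hVb
        ((memLp_top_of_zero_or_one hD.aestronglyMeasurable hDval).integrable le_top)
        (hVD.condExp_mul_ae_eq_of_zero_or_one hV hD hVval hDval)).trans
      (integral_eq_measureReal_preimage_one hD hDval)
  have hsecond : ∫ ω, (V ω * D₁ ω + (1 - V ω) * (μ[D₁ | 𝒢]) ω)
        * (V ω * D₂ ω + (1 - V ω) * (μ[D₂ | 𝒢]) ω) ∂μ
      = ∫ ω, (1 - (μ[V | 𝒢]) ω) * ((μ[D₁ | 𝒢]) ω * (μ[D₂ | 𝒢]) ω) ∂μ := by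
    rw [integral_congr_ae (hexcl.mono fun ω hω =>
      mul_add_one_sub_mul_mul_mul_add_one_sub_mul (hVval ω) hω)]
    exact integral_one_sub_mul_eq_integral_one_sub_condExp_mul h𝒢le hVb
      (stronglyMeasurable_condExp.mul stronglyMeasurable_condExp)
      (integrable_condExp.mul_of_top_right hρ₁)
  rw [hsecond, hmean D₁ hD₁ hD₁val (MAR.comp measurable_id measurable_fst),
    hmean D₂ hD₂ hD₂val (MAR.comp measurable_id measurable_snd)]

/-- Under MAR (with `V` conditionally independent of the pair
`(D₁, D₂)` given `𝒢`), for mutually exclusive class indicators `D₁, D₂` (`D₁D₂ = 0` a.s.),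
the covariance between the mean-score terms `M₁ = V·D₁ + (1 − V)·ρ₁` and
`M₂ = V·D₂ + (1 − V)·ρ₂` equals `Cov(M₁, M₂) = E[(1 − π) · ρ₁ρ₂] − θ₁θ₂`,
where `θ_k = ℙ(D_k = 1)`. -/
theorem mar_covariance_mean_score_terms
    {Ω : Type*} [mΩ : MeasurableSpace Ω] [StandardBorelSpace Ω] [Nonempty Ω]
    (μ : Measure Ω) [IsProbabilityMeasure μ] {d : ℕ}
    (T : Ω → ℝ) (A : Ω → (Fin d → ℝ)) (D₁ D₂ V : Ω → ℝ)
    (hT : Measurable T) (hA : Measurable A)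
    (hD₁ : Measurable D₁) (hD₂ : Measurable D₂) (hV : Measurable V)
    (hD₁val : ∀ ω, D₁ ω = 0 ∨ D₁ ω = 1) (hD₂val : ∀ ω, D₂ ω = 0 ∨ D₂ ω = 1)
    (hVval : ∀ ω, V ω = 0 ∨ V ω = 1)
    (hexcl : ∀ᵐ ω ∂μ, D₁ ω * D₂ ω = 0)
    (𝒢 : MeasurableSpace Ω)
    (h𝒢 : 𝒢 = MeasurableSpace.comap (fun ω => (T ω, A ω)) inferInstance)
    (h𝒢le : 𝒢 ≤ mΩ)
    (MAR : CondIndepFun (mΩ := mΩ) 𝒢 h𝒢le V (fun ω => (D₁ ω, D₂ ω)) μ) :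
    (∫ ω, (V ω * D₁ ω + (1 - V ω) * (μ[D₁ | 𝒢]) ω)
          * (V ω * D₂ ω + (1 - V ω) * (μ[D₂ | 𝒢]) ω) ∂μ)
      - (∫ ω, V ω * D₁ ω + (1 - V ω) * (μ[D₁ | 𝒢]) ω ∂μ)
        * (∫ ω, V ω * D₂ ω + (1 - V ω) * (μ[D₂ | 𝒢]) ω ∂μ)
      = (∫ ω, (1 - (μ[V | 𝒢]) ω) * ((μ[D₁ | 𝒢]) ω * (μ[D₂ | 𝒢]) ω) ∂μ)
        - (μ {ω | D₁ ω = 1}).toReal * (μ {ω | D₂ ω = 1}).toReal :=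
  mar_covariance_mean_score_terms_general (mΩ := mΩ) μ D₁ D₂ V hD₁ hD₂ hV hD₁val hD₂val hVval hexcl
    𝒢 h𝒢le MAR
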